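/- arXiv:1803.03530 — 2 statements merged into one kernel-verified Lean document; each statement's English description precedes it below -/
import Mathlib

section
/- Let ε ∈ (0,1), let k = ⌈4/ε⌉, and let Σ₁ and Σ₂ be disjoint alphabets. Suppose that for every integer i ≥ 1 there is given an (ε/2)-synchronization string S_{k^i} of length k^i, which is over Σ₁ if i is odd and over Σ₂ if i is even. Then the infinite sequential concatenation S = S_k ∘ S_{k²} ∘ S_{k³} ∘ … is an infinite ε-synchronization string over the alphabet Σ₁ ∪ Σ₂. -/
/-- The length of a longest common subsequence of two strings (lists). -/
noncomputable def lcsLen {α : Type*} (S T : List α) : ℕ :=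
  sSup {n | ∃ U : List α, U.length = n ∧ U.Sublist S ∧ U.Sublist T}

/-- The edit distance (insertions/deletions) between two strings, via
`ED(S,T) = |S| + |T| - 2·LCS(S,T)`. -/
noncomputable def editDistance {α : Type*} (S T : List α) : ℕ :=
  S.length + T.length - 2 * lcsLen S T

/-- `strSlice S a b` is the substring `S[a, b)` of `S` (1-indexed, `b` excluded). -/
def strSlice {α : Type*} (S : List α) (a b : ℕ) : List α :=
  (S.drop (a - 1)).take (b - a)

/-- `islice f a b` is the substring `f[a, b)` of the infinite string `f`
(1-indexed, `b` excluded). -/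
def islice {α : Type*} (f : ℕ → α) (a b : ℕ) : List α :=
  (List.range (b - a)).map fun t => f (a + t)

/-- `S` is an ε-synchronization string: for all `1 ≤ i < j < k ≤ |S| + 1`,
`ED(S[i,j), S[j,k)) > (1-ε)(k-i)`. -/
def IsSyncString {α : Type*} (ε : ℝ) (S : List α) : Prop :=
  ∀ i j k : ℕ, 1 ≤ i → i < j → j < k → k ≤ S.length + 1 →
    (1 - ε) * ((k : ℝ) - (i : ℝ)) < (editDistance (strSlice S i j) (strSlice S j k) : ℝ)

/-- `S` is an ε-synchronization circle: every cyclic rotation of `S` is an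
ε-synchronization string. -/
def IsSyncCircle {α : Type*} (ε : ℝ) (S : List α) : Prop :=
  ∀ i : ℕ, 1 ≤ i → i ≤ S.length → IsSyncString ε (S.rotate (i - 1))

/-- An infinite ε-synchronization string (1-indexed). -/
def IsInfSyncString {α : Type*} (ε : ℝ) (f : ℕ → α) : Prop :=
  ∀ i j k : ℕ, 1 ≤ i → i < j → j < k →
    (1 - ε) * ((k : ℝ) - (i : ℝ)) < (editDistance (islice f i j) (islice f j k) : ℝ)

/-- `S` is a `c`-long-distance ε-synchronization string: for all
`1 ≤ i < j ≤ i' < j' ≤ |S| + 1` with `l = (j-i)+(j'-i')`, if the two intervals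
are adjacent (`i' = j`) or `l > c · log |S|`, then
`ED(S[i,j), S[i',j')) > (1-ε)·l`. -/
noncomputable def IsLongDistSyncString {α : Type*} (c ε : ℝ) (S : List α) : Prop :=
  ∀ i j i' j' : ℕ, 1 ≤ i → i < j → j ≤ i' → i' < j' → j' ≤ S.length + 1 →
    (i' = j ∨ c * Real.log (S.length : ℝ) < ((j : ℝ) - i) + ((j' : ℝ) - i')) →
    (1 - ε) * (((j : ℝ) - i) + ((j' : ℝ) - i')) <
      (editDistance (strSlice S i j) (strSlice S i' j') : ℝ)

/-- An infinite weak ε-synchronization string: for all `1 ≤ i < j < k`,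
`ED(S[i,j), S[j,k)) ≥ ⌊(1-ε)(k-i)⌋`. -/
def IsInfWeakSyncString {α : Type*} (ε : ℝ) (f : ℕ → α) : Prop :=
  ∀ i j k : ℕ, 1 ≤ i → i < j → j < k →
    ((⌊(1 - ε) * ((k : ℝ) - (i : ℝ))⌋ : ℤ) : ℝ) ≤
      (editDistance (islice f i j) (islice f j k) : ℝ)

/-!
Let `j` lie in block `m`, and cut `f[i, j)` and `f[j, k)` at the boundaries of block `m`. A common
subsequence matches the piece of `f[i, j)` before block `m` with the piece of `f[j, k)` inside it,
the piece inside with the piece after, and in between either the two pieces inside block `m` or the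
two pieces outside it. The inside–inside part is at most `(ε/4)(k - i)` since block `m` is an
`ε/2`-synchronization string. Each other part, and the two outer ones together, is below
`(k - i)/K ≤ (ε/4)(k - i)` because block lengths grow by the factor `K ≥ 4/ε`: the piece before
block `m` is short, and as neighbouring blocks have disjoint alphabets, a symbol of block `m` can
only be matched with one at least a whole block away.
-/

section

open List

variable {α : Type*}

lemma lcsLen_le_of_forall {S T : List α} {n : ℕ}
    (h : ∀ U : List α, U <+ S → U <+ T → U.length ≤ n) : lcsLen S T ≤ n :=
  csSup_le ⟨0, [], rfl, nil_sublist _, nil_sublist _⟩ fun _ ⟨U, hU, hS, hT⟩ => hU ▸ h U hS hT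

lemma le_lcsLen {S T U : List α} (hS : U <+ S) (hT : U <+ T) : U.length ≤ lcsLen S T :=
  le_csSup ⟨S.length, fun _ ⟨_, hV, hVS, _⟩ => hV ▸ hVS.length_le⟩ ⟨U, rfl, hS, hT⟩

lemma lcsLen_le_length_left (S T : List α) : lcsLen S T ≤ S.length :=
  lcsLen_le_of_forall fun _ hS _ => hS.length_le

lemma lcsLen_le_length_right (S T : List α) : lcsLen S T ≤ T.length :=
  lcsLen_le_of_forall fun _ _ hT => hT.length_le

lemma lcsLen_nil_left (T : List α) : lcsLen [] T = 0 :=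
  Nat.le_zero.mp (lcsLen_le_length_left [] T)

lemma lcsLen_nil_right (S : List α) : lcsLen S [] = 0 :=
  Nat.le_zero.mp (lcsLen_le_length_right S [])

/-- A common subsequence of `L₁ ++ L₂` and `R₁ ++ R₂` pairs `L₁` with `R₁` and `L₂` with `R₂`,
except for one middle stretch, which pairs either `L₂` with `R₁` or `L₁` with `R₂`. -/
lemma lcsLen_append_append_le (L₁ L₂ R₁ R₂ : List α) :
    lcsLen (L₁ ++ L₂) (R₁ ++ R₂) ≤
      lcsLen L₁ R₁ + lcsLen L₂ R₂ + max (lcsLen L₂ R₁) (lcsLen L₁ R₂) := by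
  refine lcsLen_le_of_forall fun U hL hR => ?_
  obtain ⟨U₁, U₂, rfl, hU₁, hU₂⟩ := sublist_append_iff.mp hL
  obtain ⟨V₁, V₂, hUV, hV₁, hV₂⟩ := sublist_append_iff.mp hR
  rcases append_eq_append_iff.mp hUV with ⟨W, rfl, rfl⟩ | ⟨W, rfl, rfl⟩
  · have h₁ := le_lcsLen hU₁ ((sublist_append_left U₁ W).trans hV₁)
    have h₂ := le_lcsLen ((sublist_append_right W V₂).trans hU₂) hV₂
    have hW :=
      le_lcsLen ((sublist_append_left W V₂).trans hU₂) ((sublist_append_right U₁ W).trans hV₁)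
    simp only [length_append]
    omega
  · have h₁ := le_lcsLen ((sublist_append_left V₁ W).trans hU₁) hV₁
    have h₂ := le_lcsLen hU₂ ((sublist_append_right W U₂).trans hV₂)
    have hW :=
      le_lcsLen ((sublist_append_right V₁ W).trans hU₁) ((sublist_append_left W U₂).trans hV₂)
    simp only [length_append]
    omega

lemma lcsLen_append_left_le_of_disjoint {G B R : List α} (h : B.Disjoint R) :
    lcsLen (G ++ B) R ≤ lcsLen G R := by
  refine lcsLen_le_of_forall fun U hGB hR => ?_
  obtain ⟨U₁, U₂, rfl, hU₁, hU₂⟩ := sublist_append_iff.mp hGB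
  obtain rfl : U₂ = [] :=
    eq_nil_iff_forall_not_mem.mpr fun x hx => h (hU₂.subset hx) (hR.subset (mem_append_right _ hx))
  simpa using le_lcsLen hU₁ ((sublist_append_left U₁ []).trans hR)

lemma lcsLen_append_right_le_of_disjoint {L B G : List α} (h : L.Disjoint B) :
    lcsLen L (B ++ G) ≤ lcsLen L G := by
  refine lcsLen_le_of_forall fun U hL hBG => ?_
  obtain ⟨U₁, U₂, rfl, hU₁, hU₂⟩ := sublist_append_iff.mp hBG
  obtain rfl : U₁ = [] :=
    eq_nil_iff_forall_not_mem.mpr fun x hx => h (hL.subset (mem_append_left _ hx)) (hU₁.subset hx)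
  simpa using le_lcsLen ((sublist_append_right [] U₂).trans hL) hU₂

lemma lt_editDistance_iff {ε : ℝ} (S T : List α) :
    (1 - ε) * ((S.length : ℝ) + T.length) < editDistance S T ↔
      2 * (lcsLen S T : ℝ) < ε * ((S.length : ℝ) + T.length) := by
  have h : 2 * lcsLen S T ≤ S.length + T.length := by
    have := lcsLen_le_length_left S T
    have := lcsLen_le_length_right S T
    omega
  rw [editDistance, Nat.cast_sub h]
  push_cast
  constructor <;> intro <;> linarith

lemma length_strSlice {S : List α} {a b : ℕ} (ha : 1 ≤ a) (hb : b ≤ S.length + 1) :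
    (strSlice S a b).length = b - a := by
  simp only [strSlice, length_take, length_drop]
  omega

lemma length_islice (f : ℕ → α) (a b : ℕ) : (islice f a b).length = b - a := by
  simp [islice]

lemma mem_islice {f : ℕ → α} {a b : ℕ} {x : α} :
    x ∈ islice f a b ↔ ∃ p, a ≤ p ∧ p < b ∧ f p = x := by
  simp only [islice, mem_map, mem_range]
  constructor
  · rintro ⟨t, ht, rfl⟩
    exact ⟨a + t, by omega, by omega, rfl⟩
  · rintro ⟨p, h₁, h₂, rfl⟩
    exact ⟨p - a, by omega, by rw [Nat.add_sub_cancel' h₁]⟩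

lemma islice_append {f : ℕ → α} {a b c : ℕ} (hab : a ≤ b) (hbc : b ≤ c) :
    islice f a b ++ islice f b c = islice f a c := by
  refine ext_getElem (by simp [length_islice]; omega) fun n h₁ h₂ => ?_
  rcases lt_or_ge n (b - a) with h | h
  · rw [getElem_append_left (by simpa [length_islice] using h)]
    simp only [islice, getElem_map, getElem_range]
  · rw [getElem_append_right (by simpa [length_islice] using h)]
    simp only [islice, getElem_map, getElem_range, length_map, length_range]
    congr 1
    omega

lemma strSlice_islice (f : ℕ → α) {s e p q : ℕ} (hp : 1 ≤ p) (hq : s + q ≤ e) :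
    strSlice (islice f (s + 1) e) p q = islice f (s + p) (s + q) := by
  refine ext_getElem (by simp [strSlice, islice]; omega) fun n _ _ => ?_
  simp only [strSlice, islice, getElem_take, getElem_drop, getElem_map, getElem_range]
  congr 1
  omega

lemma IsSyncString.two_mul_lcsLen_le {ε : ℝ} {S : List α} (h : IsSyncString ε S) (hε : 0 ≤ ε)
    {a b c : ℕ} (ha : 1 ≤ a) (hab : a ≤ b) (hbc : b ≤ c) (hc : c ≤ S.length + 1) :
    2 * (lcsLen (strSlice S a b) (strSlice S b c) : ℝ) ≤ ε * ((c : ℝ) - a) := by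
  have hca : (0 : ℝ) ≤ (c : ℝ) - a := by
    rw [sub_nonneg]
    exact_mod_cast hab.trans hbc
  rcases hab.eq_or_lt with rfl | hab
  · simp [strSlice, lcsLen_nil_left, mul_nonneg hε hca]
  rcases hbc.eq_or_lt with rfl | hbc
  · simp [strSlice, lcsLen_nil_right, mul_nonneg hε hca]
  have hlen : ((strSlice S a b).length : ℝ) + (strSlice S b c).length = (c : ℝ) - a := by
    rw [length_strSlice ha (by omega), length_strSlice (by omega) hc, Nat.cast_sub hab.le,
      Nat.cast_sub hbc.le]
    ring
  have := h a b c ha hab hbc hc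
  rw [← hlen, lt_editDistance_iff, hlen] at this
  exact this.le

lemma IsSyncString.two_mul_lcsLen_islice_le {ε : ℝ} {f : ℕ → α} {s e : ℕ}
    (h : IsSyncString ε (islice f (s + 1) (e + 1))) (hε : 0 ≤ ε) {a b c : ℕ}
    (ha : s < a) (hab : a ≤ b) (hbc : b ≤ c) (hc : c ≤ e + 1) :
    2 * (lcsLen (islice f a b) (islice f b c) : ℝ) ≤ ε * ((c : ℝ) - a) := by
  have key := h.two_mul_lcsLen_le hε (a := a - s) (b := b - s) (c := c - s) (by omega) (by omega)
    (by omega) (by rw [length_islice]; omega)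
  rwa [strSlice_islice f (by omega) (by omega), strSlice_islice f (by omega) (by omega),
    Nat.add_sub_cancel' ha.le, Nat.add_sub_cancel' (ha.le.trans hab),
    Nat.add_sub_cancel' (by omega), Nat.cast_sub (by omega), Nat.cast_sub ha.le,
    sub_sub_sub_cancel_right] at key

/-- Block `n + 1` of a concatenation of blocks of lengths `K, K², …` occupies the positions
`blockEnd K n + 1, …, blockEnd K (n + 1)`. -/
def blockEnd (K n : ℕ) : ℕ := ∑ j ∈ Finset.Icc 1 n, K ^ j

section blockEnd

variable {K : ℕ}

@[simp] lemma blockEnd_zero : blockEnd K 0 = 0 := by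
  simp [blockEnd]

lemma blockEnd_succ (n : ℕ) : blockEnd K (n + 1) = blockEnd K n + K ^ (n + 1) :=
  Finset.sum_Icc_succ_top (by omega) _

lemma blockEnd_succ_eq_mul_add (n : ℕ) : blockEnd K (n + 1) = K * blockEnd K n + K := by
  induction n with
  | zero => simp [blockEnd_succ]
  | succ n ih =>
    rw [blockEnd_succ (n + 1)]
    nth_rw 1 [ih]
    rw [blockEnd_succ n]
    ring

lemma le_blockEnd (hK : 1 ≤ K) (n : ℕ) : n ≤ blockEnd K n := by
  induction n with
  | zero => simp
  | succ n ih =>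
    have := Nat.one_le_pow (n + 1) K hK
    rw [blockEnd_succ]
    omega

lemma exists_mem_block (hK : 1 ≤ K) {j : ℕ} (hj : 1 ≤ j) :
    ∃ m, blockEnd K m < j ∧ j ≤ blockEnd K (m + 1) := by
  have hex : ∃ n, j ≤ blockEnd K n := ⟨j, le_blockEnd hK j⟩
  obtain ⟨m, hm⟩ : ∃ m, Nat.find hex = m + 1 := Nat.exists_eq_succ_of_ne_zero fun h => by
    have := Nat.find_spec hex
    rw [h, blockEnd_zero] at this
    omega
  exact ⟨m, not_le.mp (Nat.find_min hex (by omega)), hm ▸ Nat.find_spec hex⟩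

end blockEnd

lemma two_mul_le_of_mul_le {δ : ℝ} {K n d : ℕ} (hδK : 2 ≤ δ * K) (h : K * n ≤ d) :
    2 * (n : ℝ) ≤ δ * d := by
  have h' : (K : ℝ) * n ≤ d := by exact_mod_cast h
  have hδ : 0 ≤ δ := by nlinarith [Nat.cast_nonneg (α := ℝ) K]
  nlinarith [mul_nonneg (sub_nonneg.2 hδK) (Nat.cast_nonneg (α := ℝ) n),
    mul_le_mul_of_nonneg_left h' hδ]

lemma two_mul_lt_of_mul_lt {δ : ℝ} {K n d : ℕ} (hδK : 2 ≤ δ * K) (h : K * n < d) :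
    2 * (n : ℝ) < δ * d := by
  have h' : (K : ℝ) * n < d := by exact_mod_cast h
  have hδ : 0 < δ := by nlinarith [Nat.cast_nonneg (α := ℝ) K]
  nlinarith [mul_nonneg (sub_nonneg.2 hδK) (Nat.cast_nonneg (α := ℝ) n),
    mul_lt_mul_of_pos_left h' hδ]

section blocks

variable {K : ℕ} {f : ℕ → α} {alph : ℕ → Set α}

lemma islice_disjoint_of_blocks
    (hcolor : ∀ n, ∀ x ∈ islice f (blockEnd K n + 1) (blockEnd K (n + 1) + 1), x ∈ alph n)
    (hdisj : ∀ n, Disjoint (alph n) (alph (n + 1))) {n a b c d : ℕ}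
    (ha : blockEnd K n < a) (hb : b ≤ blockEnd K (n + 1) + 1) (hc : blockEnd K (n + 1) < c)
    (hd : d ≤ blockEnd K (n + 1 + 1) + 1) : (islice f a b).Disjoint (islice f c d) := by
  intro x hx hy
  obtain ⟨p, hap, hpb, rfl⟩ := mem_islice.mp hx
  obtain ⟨q, hcq, hqd, hq⟩ := mem_islice.mp hy
  exact Set.disjoint_left.mp (hdisj n) (hcolor n _ (mem_islice.mpr ⟨p, by omega, by omega, rfl⟩))
    (hcolor (n + 1) _ (mem_islice.mpr ⟨q, by omega, by omega, hq⟩))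

/-- Symbols of `f[i, j)` matching the block of `j` lie at least one block further left. -/
lemma mul_lcsLen_before_block_lt (hK : 1 ≤ K)
    (hcolor : ∀ n, ∀ x ∈ islice f (blockEnd K n + 1) (blockEnd K (n + 1) + 1), x ∈ alph n)
    (hdisj : ∀ n, Disjoint (alph n) (alph (n + 1))) {m i j k : ℕ} (hi : 1 ≤ i) (hij : i < j)
    (hmj : blockEnd K m < j) :
    K * lcsLen (islice f i (max i (blockEnd K m + 1)))
      (islice f j (min k (blockEnd K (m + 1) + 1))) < j - i := by
  by_cases hmi : blockEnd K m < i
  · simp [max_eq_left (Nat.succ_le_of_lt hmi), islice, lcsLen_nil_left, hij]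
  cases m with
  | zero => simp at hmi; omega
  | succ m =>
    have hts : blockEnd K (m + 1) = K * blockEnd K m + K := blockEnd_succ_eq_mul_add m
    have hKt : blockEnd K m ≤ K * blockEnd K m := Nat.le_mul_of_pos_left _ hK
    set t := blockEnd K m
    set s := blockEnd K (m + 1)
    have hsplit : islice f i (max i (s + 1)) =
        islice f i (max i (t + 1)) ++ islice f (max i (t + 1)) (max i (s + 1)) :=
      (islice_append (le_max_left _ _) (by omega)).symm
    have hx : lcsLen (islice f i (max i (s + 1))) (islice f j (min k (blockEnd K (m + 1 + 1) + 1)))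
        ≤ max i (t + 1) - i := by
      rw [hsplit]
      refine (lcsLen_append_left_le_of_disjoint ?_).trans ?_
      · exact islice_disjoint_of_blocks (n := m) hcolor hdisj (by omega) (by omega) hmj (by omega)
      · exact (lcsLen_le_length_left _ _).trans_eq (length_islice _ _ _)
    set x := lcsLen (islice f i (max i (s + 1))) (islice f j (min k (blockEnd K (m + 1 + 1) + 1)))
    rcases Nat.eq_zero_or_pos x with hx0 | hxpos
    · rw [hx0]
      omega
    · have hKx : K * (x + i) ≤ K * (t + 1) := Nat.mul_le_mul_left K (by omega)
      have hKi : i ≤ K * i := Nat.le_mul_of_pos_left i hK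
      rw [mul_add, mul_add] at hKx
      omega

/-- Symbols of `f[j, k)` matching the block of `j` lie at least one block further right. -/
lemma mul_lcsLen_block_after_le
    (hcolor : ∀ n, ∀ x ∈ islice f (blockEnd K n + 1) (blockEnd K (n + 1) + 1), x ∈ alph n)
    (hdisj : ∀ n, Disjoint (alph n) (alph (n + 1))) {m i j k : ℕ}
    (hmj : blockEnd K m < j) (hjm : j ≤ blockEnd K (m + 1)) :
    K * lcsLen (islice f (max i (blockEnd K m + 1)) j)
      (islice f (min k (blockEnd K (m + 1) + 1)) k) ≤ k - j := by
  have hes : blockEnd K (m + 1) = blockEnd K m + K ^ (m + 1) := blockEnd_succ m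
  have hEe : blockEnd K (m + 1 + 1) = blockEnd K (m + 1) + K * K ^ (m + 1) := by
    rw [blockEnd_succ (m + 1), pow_succ']
  set s := blockEnd K m
  set e := blockEnd K (m + 1)
  set E := blockEnd K (m + 1 + 1)
  set q := K ^ (m + 1)
  by_cases hke : k ≤ e
  · simp [min_eq_left (by omega : k ≤ e + 1), islice, lcsLen_nil_right]
  have hsplit : islice f (min k (e + 1)) k =
      islice f (min k (e + 1)) (min k (E + 1)) ++ islice f (min k (E + 1)) k :=
    (islice_append (by omega) (min_le_left _ _)).symm
  have hy : lcsLen (islice f (max i (s + 1)) j) (islice f (min k (e + 1)) k)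
      ≤ min (j - max i (s + 1)) (k - min k (E + 1)) := by
    rw [hsplit]
    refine (lcsLen_append_right_le_of_disjoint ?_).trans ?_
    · exact islice_disjoint_of_blocks (n := m) hcolor hdisj (by omega) (by omega) (by omega)
        (by omega)
    · exact le_min ((lcsLen_le_length_left _ _).trans_eq (length_islice _ _ _))
        ((lcsLen_le_length_right _ _).trans_eq (length_islice _ _ _))
  set y := lcsLen (islice f (max i (s + 1)) j) (islice f (min k (e + 1)) k)
  have hKy : K * y ≤ K * q := Nat.mul_le_mul_left K (by omega)
  rcases Nat.eq_zero_or_pos y with hy0 | hypos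
  · rw [hy0]
    omega
  · omega

lemma mul_lcsLen_before_after_le {m i k : ℕ} :
    K * lcsLen (islice f i (max i (blockEnd K m + 1)))
      (islice f (min k (blockEnd K (m + 1) + 1)) k) ≤ k - i := by
  set s := blockEnd K m
  have hes : blockEnd K (m + 1) = K * s + K := blockEnd_succ_eq_mul_add m
  have hw : lcsLen (islice f i (max i (s + 1))) (islice f (min k (blockEnd K (m + 1) + 1)) k)
      ≤ min (max i (s + 1) - i) (k - min k (blockEnd K (m + 1) + 1)) :=
    le_min ((lcsLen_le_length_left _ _).trans_eq (length_islice _ _ _))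
      ((lcsLen_le_length_right _ _).trans_eq (length_islice _ _ _))
  set w := lcsLen (islice f i (max i (s + 1))) (islice f (min k (blockEnd K (m + 1) + 1)) k)
  rcases Nat.eq_zero_or_pos w with hw0 | hwpos
  · rw [hw0]
    omega
  rcases Nat.eq_zero_or_pos K with hK0 | hK
  · rw [hK0]
    omega
  · have hKw : K * (w + i) ≤ K * (s + 1) := Nat.mul_le_mul_left K (by omega)
    have hKi : i ≤ K * i := Nat.le_mul_of_pos_left i hK
    rw [mul_add, mul_add] at hKw
    omega

end blocks

theorem isInfSyncString_two_mul_of_blocks {K : ℕ} {δ : ℝ} {f : ℕ → α} {alph : ℕ → Set α}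
    (hδK : 2 ≤ δ * K)
    (hsync : ∀ n, IsSyncString δ (islice f (blockEnd K n + 1) (blockEnd K (n + 1) + 1)))
    (hcolor : ∀ n, ∀ x ∈ islice f (blockEnd K n + 1) (blockEnd K (n + 1) + 1), x ∈ alph n)
    (hdisj : ∀ n, Disjoint (alph n) (alph (n + 1))) :
    IsInfSyncString (2 * δ) f := by
  have hK : 1 ≤ K := Nat.one_le_iff_ne_zero.mpr fun h => by simp [h] at hδK; linarith
  have hδ : 0 ≤ δ := by nlinarith [Nat.cast_nonneg (α := ℝ) K]
  intro i j k hi hij hjk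
  obtain ⟨m, hmj, hjm⟩ := exists_mem_block hK (hi.trans hij.le)
  set u := max i (blockEnd K m + 1)
  set v := min k (blockEnd K (m + 1) + 1)
  have hlen : ((islice f i j).length : ℝ) + (islice f j k).length = (k : ℝ) - i := by
    rw [length_islice, length_islice, Nat.cast_sub hij.le, Nat.cast_sub hjk.le]
    ring
  rw [← hlen, lt_editDistance_iff, hlen, ← islice_append (le_max_left i _) (by omega : u ≤ j),
    ← islice_append (by omega : j ≤ v) (min_le_left k _)]
  have hsplit := lcsLen_append_append_le (islice f i u) (islice f u j) (islice f j v) (islice f v k)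
  have hx : 2 * (lcsLen (islice f i u) (islice f j v) : ℝ) < δ * ((j : ℝ) - i) := by
    rw [← Nat.cast_sub hij.le]
    exact two_mul_lt_of_mul_lt hδK (mul_lcsLen_before_block_lt hK hcolor hdisj hi hij hmj)
  have hy : 2 * (lcsLen (islice f u j) (islice f v k) : ℝ) ≤ δ * ((k : ℝ) - j) := by
    rw [← Nat.cast_sub hjk.le]
    exact two_mul_le_of_mul_le hδK (mul_lcsLen_block_after_le hcolor hdisj hmj hjm)
  have hw₁ : 2 * (lcsLen (islice f u j) (islice f j v) : ℝ) ≤ δ * ((k : ℝ) - i) := by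
    refine ((hsync m).two_mul_lcsLen_islice_le hδ (by omega) (by omega) (by omega) (by omega)).trans
      (mul_le_mul_of_nonneg_left ?_ hδ)
    have hvk : (v : ℝ) ≤ k := by exact_mod_cast min_le_left k _
    have hiu : (i : ℝ) ≤ u := by exact_mod_cast le_max_left i _
    linarith
  have hw₂ : 2 * (lcsLen (islice f i u) (islice f v k) : ℝ) ≤ δ * ((k : ℝ) - i) := by
    rw [← Nat.cast_sub (hij.trans hjk).le]
    exact two_mul_le_of_mul_le hδK mul_lcsLen_before_after_le
  have hw := max_le hw₁ hw₂
  rw [← mul_max_of_nonneg _ _ zero_le_two] at hw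
  have hsplit' := (Nat.cast_le (α := ℝ)).mpr hsplit
  push_cast at hsplit'
  linarith

end

theorem infinite_concat_isInfSyncString_general {α : Type*} (ε : ℝ)
    (hε : 0 < ε)
    (A B : Set α) (hAB : Disjoint A B)
    (T : ℕ → List α)
    (hsync : ∀ i : ℕ, 1 ≤ i → IsSyncString (ε / 2) (T i))
    (hodd : ∀ i : ℕ, 1 ≤ i → Odd i → ∀ x ∈ T i, x ∈ A)
    (heven : ∀ i : ℕ, 1 ≤ i → Even i → ∀ x ∈ T i, x ∈ B)
    (f : ℕ → α)
    (hconcat : ∀ i : ℕ, 1 ≤ i →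
      islice f ((∑ j ∈ Finset.Icc 1 (i - 1), (⌈(4 : ℝ) / ε⌉₊) ^ j) + 1)
               ((∑ j ∈ Finset.Icc 1 i, (⌈(4 : ℝ) / ε⌉₊) ^ j) + 1) = T i) :
    IsInfSyncString ε f := by
  have hblock (n : ℕ) :
      islice f (blockEnd ⌈4 / ε⌉₊ n + 1) (blockEnd ⌈4 / ε⌉₊ (n + 1) + 1) = T (n + 1) :=
    hconcat (n + 1) n.succ_pos
  have hK : 2 ≤ ε / 2 * ⌈4 / ε⌉₊ := by
    have := Nat.le_ceil (4 / ε)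
    rw [div_le_iff₀ hε] at this
    linarith
  have hcolor (n : ℕ) : ∀ x ∈ T (n + 1), x ∈ if Even n then A else B := by
    by_cases hn : Even n
    · simpa [hn] using hodd (n + 1) n.succ_pos hn.add_one
    · simpa [hn] using heven (n + 1) n.succ_pos (Nat.even_add_one.mpr hn)
  have hdisj (n : ℕ) : Disjoint (if Even n then A else B) (if Even (n + 1) then A else B) := by
    by_cases hn : Even n <;> simp [hn, Nat.even_add_one, hAB, hAB.symm]
  simpa [mul_div_cancel₀] using isInfSyncString_two_mul_of_blocks hK
    (fun n => hblock n ▸ hsync (n + 1) n.succ_pos) (fun n => hblock n ▸ hcolor n) hdisj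

/-- Let `ε ∈ (0,1)`, `k = ⌈4/ε⌉`, and let `A`, `B` be disjoint
alphabets. If for every `i ≥ 1` we have an `(ε/2)`-synchronization string `T i`
of length `k^i`, over `A` for odd `i` and over `B` for even `i`, then the
infinite sequential concatenation `f = T 1 ∘ T 2 ∘ …` is an infinite
ε-synchronization string. -/
theorem infinite_concat_isInfSyncString {α : Type*} (ε : ℝ)
    (hε : 0 < ε) (hε1 : ε < 1)
    (A B : Set α) (hAB : Disjoint A B)
    (T : ℕ → List α)
    (hlen : ∀ i : ℕ, 1 ≤ i → (T i).length = (⌈(4 : ℝ) / ε⌉₊) ^ i)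
    (hsync : ∀ i : ℕ, 1 ≤ i → IsSyncString (ε / 2) (T i))
    (hodd : ∀ i : ℕ, 1 ≤ i → Odd i → ∀ x ∈ T i, x ∈ A)
    (heven : ∀ i : ℕ, 1 ≤ i → Even i → ∀ x ∈ T i, x ∈ B)
    (f : ℕ → α)
    (hconcat : ∀ i : ℕ, 1 ≤ i →
      islice f ((∑ j ∈ Finset.Icc 1 (i - 1), (⌈(4 : ℝ) / ε⌉₊) ^ j) + 1)
               ((∑ j ∈ Finset.Icc 1 i, (⌈(4 : ℝ) / ε⌉₊) ^ j) + 1) = T i) :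
    IsInfSyncString ε f :=
  infinite_concat_isInfSyncString_general ε hε A B hAB T hsync hodd heven f hconcat
end

section
/- Let φ be a uniform morphism of rank r over a finite alphabet Σ such that for every σ ∈ Σ the string φ(σ) contains every symbol of Σ. Then for every n ∈ ℕ and every δ ∈ (0,1) there exists m ∈ ℕ such that for all a, b ∈ Σ: LCS(φ^m(a), φ^m(b)) ≥ (1 − (1 − 1/(|Σ|²·r))^n − δ) · r^m. -/
/-!
Write `τ = List.flatMap φ` and `w = 2r`. Every window of length `w` of a string of the form
`τ Z` contains every symbol, so for `X = τᵏ a`, `Y = τᵏ b` of length `R = rᵏ`, averaging over the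
shifts `d < w` finds a shift at which at least `(R - w)/w` positions `i` satisfy `X[i] = Y[i + d]`.
Aligning `X` with `Y` shifted by `d` and expanding each symbol to `τᵐ` of it, the matching
positions contribute a full block `rᵐ` and the others at least the current lower bound. Hence the
relative deficiency `x` of `LCS(τᵐ a, τᵐ b)` contracts to `(1 - 1/w) x + w/R` over `k` steps, and
iterating with `R` large makes it arbitrarily small.
-/

section LCS

variable {α β : Type*}

lemma lcsLen_bddAbove (S T : List α) :
    BddAbove {n | ∃ U : List α, U.length = n ∧ U.Sublist S ∧ U.Sublist T} :=
  bddAbove_def.2 ⟨S.length, fun _ ⟨_, hn, hS, _⟩ => hn ▸ hS.length_le⟩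

lemma length_le_lcsLen {U S T : List α} (hS : U.Sublist S) (hT : U.Sublist T) :
    U.length ≤ lcsLen S T :=
  le_csSup (lcsLen_bddAbove S T) ⟨U, rfl, hS, hT⟩

lemma exists_sublist_length_eq_lcsLen (S T : List α) :
    ∃ U : List α, U.length = lcsLen S T ∧ U.Sublist S ∧ U.Sublist T :=
  Nat.sSup_mem (s := {n | ∃ U : List α, U.length = n ∧ U.Sublist S ∧ U.Sublist T})
    ⟨0, [], rfl, List.nil_sublist _, List.nil_sublist _⟩ (lcsLen_bddAbove S T)

lemma lcsLen_self (S : List α) : lcsLen S S = S.length := by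
  refine le_antisymm ?_ (length_le_lcsLen (.refl S) (.refl S))
  obtain ⟨U, hU, hS, -⟩ := exists_sublist_length_eq_lcsLen S S
  exact hU ▸ hS.length_le

lemma lcsLen_mono_right (S : List α) {T T' : List α} (h : T.Sublist T') :
    lcsLen S T ≤ lcsLen S T' := by
  obtain ⟨U, hU, hS, hT⟩ := exists_sublist_length_eq_lcsLen S T
  exact hU ▸ length_le_lcsLen hS (hT.trans h)

lemma lcsLen_add_le_lcsLen_append (S₁ S₂ T₁ T₂ : List α) :
    lcsLen S₁ T₁ + lcsLen S₂ T₂ ≤ lcsLen (S₁ ++ S₂) (T₁ ++ T₂) := by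
  obtain ⟨U₁, h₁, hS₁, hT₁⟩ := exists_sublist_length_eq_lcsLen S₁ T₁
  obtain ⟨U₂, h₂, hS₂, hT₂⟩ := exists_sublist_length_eq_lcsLen S₂ T₂
  simpa [h₁, h₂] using length_le_lcsLen (hS₁.append hS₂) (hT₁.append hT₂)

lemma sum_map_zip_lcsLen_le (g : α → List β) : ∀ X Y : List α,
    ((X.zip Y).map fun p => lcsLen (g p.1) (g p.2)).sum ≤
      lcsLen (X.flatMap g) (Y.flatMap g)
  | [], _ => by simp
  | _ :: _, [] => by simp
  | x :: X, y :: Y => by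
    simp only [List.zip_cons_cons, List.map_cons, List.sum_cons, List.flatMap_cons]
    exact (Nat.add_le_add_left (sum_map_zip_lcsLen_le g X Y) _).trans
      (lcsLen_add_le_lcsLen_append _ _ _ _)

variable [DecidableEq α]

lemma length_mul_add_countP_mul_le_sum {g : α → List β} {ℓ : ℕ} {L : ℝ}
    (hg : ∀ a, (g a).length = ℓ) (hL : ∀ a b, L ≤ lcsLen (g a) (g b)) (P : List (α × α)) :
    P.length * L + P.countP (fun p => p.1 = p.2) * (ℓ - L) ≤
      ((P.map fun p => lcsLen (g p.1) (g p.2)).sum : ℝ) := by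
  induction P with
  | nil => simp
  | cons p P ih =>
    have hp : L + (if p.1 = p.2 then (ℓ - L : ℝ) else 0) ≤ lcsLen (g p.1) (g p.2) := by
      split_ifs with h
      · simp [h, lcsLen_self, hg]
      · simpa using hL p.1 p.2
    simp only [List.length_cons, List.countP_cons, List.map_cons, List.sum_cons,
      decide_eq_true_eq, Nat.cast_add, Nat.cast_one]
    split_ifs at hp ⊢ <;> simp only [Nat.cast_one, Nat.cast_zero] <;> linarith

lemma countP_zip_cons (x : α) (X T : List α) :
    ((x :: X).zip T).countP (fun p => p.1 = p.2) =
      (X.zip T.tail).countP (fun p => p.1 = p.2) + if T.head? = some x then 1 else 0 := by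
  cases T with
  | nil => simp
  | cons t T => simp [List.countP_cons, eq_comm]

lemma length_sub_le_sum_countP_zip_drop {w : ℕ} : ∀ {X Y : List α}, Y.length ≤ X.length →
    (∀ i x, w ≤ (Y.drop i).length → x ∈ (Y.drop i).take w) →
    Y.length - w ≤ ∑ d ∈ Finset.range w, (X.zip (Y.drop d)).countP (fun p => p.1 = p.2)
  | _, [], _, _ => by simp
  | [], _ :: _, hXY, _ => by simp at hXY
  | x :: X, y :: Y, hXY, hY => by
    have ih := length_sub_le_sum_countP_zip_drop (X := X) (Y := Y) (by simpa using hXY)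
      (fun i z hi => by simpa using hY (i + 1) z (by simpa using hi))
    have hsplit : ∀ d, ((x :: X).zip ((y :: Y).drop d)).countP (fun p => p.1 = p.2) =
        (X.zip (Y.drop d)).countP (fun p => p.1 = p.2) +
          if (y :: Y)[d]? = some x then 1 else 0 := by
      intro d
      rw [countP_zip_cons, List.tail_drop, List.head?_drop]
      rfl
    rw [Finset.sum_congr rfl fun d _ => hsplit d, Finset.sum_add_distrib]
    by_cases hw : w ≤ (y :: Y).length
    · obtain ⟨d, hd⟩ := List.mem_iff_getElem?.1 (hY 0 x (by simpa using hw))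
      rw [List.drop_zero, List.getElem?_take] at hd
      split_ifs at hd with hdw
      have hx : 1 ≤ ∑ d ∈ Finset.range w, if (y :: Y)[d]? = some x then 1 else 0 :=
        le_of_eq_of_le (by simp [hd])
          (Finset.single_le_sum (fun _ _ => Nat.zero_le _) (Finset.mem_range.2 hdw))
      simp only [List.length_cons] at ih ⊢
      omega
    · simp only [List.length_cons, not_le] at hw ⊢
      omega

lemma lcsLen_flatMap_ge {g : α → List β} {ℓ : ℕ} {L : ℝ} (hg : ∀ a, (g a).length = ℓ)
    (hL : ∀ a b, L ≤ lcsLen (g a) (g b)) (hL₀ : 0 ≤ L) (hLℓ : L ≤ ℓ) {w : ℕ} (hw : 0 < w)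
    {X Y : List α} (hXY : X.length = Y.length)
    (hY : ∀ i x, w ≤ (Y.drop i).length → x ∈ (Y.drop i).take w) :
    (Y.length - w : ℝ) * L + (Y.length - w) / w * (ℓ - L) ≤
      lcsLen (X.flatMap g) (Y.flatMap g) := by
  obtain ⟨d, hd, hmatch⟩ : ∃ d ∈ Finset.range w,
      Y.length - w ≤ w * (X.zip (Y.drop d)).countP (fun p => p.1 = p.2) := by
    refine Finset.exists_le_of_sum_le (Finset.nonempty_range_iff.2 hw.ne') ?_
    rw [← Finset.mul_sum, Finset.sum_const, Finset.card_range, smul_eq_mul]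
    exact Nat.mul_le_mul_left w (length_sub_le_sum_countP_zip_drop hXY.ge hY)
  set P := X.zip (Y.drop d)
  have hP : (Y.length - w : ℝ) ≤ P.length := by
    have : Y.length ≤ P.length + w := by
      simp only [P, List.length_zip, List.length_drop, hXY]
      have := Finset.mem_range.1 hd
      omega
    rw [sub_le_iff_le_add]
    exact_mod_cast this
  have hM : (Y.length - w : ℝ) / w ≤ P.countP (fun p => p.1 = p.2) := by
    rw [div_le_iff₀ (by exact_mod_cast hw), mul_comm]
    calc (Y.length - w : ℝ) ≤ ((Y.length - w : ℕ) : ℝ) := by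
          rw [sub_le_iff_le_add]; exact_mod_cast (by omega : Y.length ≤ Y.length - w + w)
      _ ≤ _ := by exact_mod_cast hmatch
  calc (Y.length - w : ℝ) * L + (Y.length - w) / w * (ℓ - L)
      ≤ P.length * L + P.countP (fun p => p.1 = p.2) * (ℓ - L) := by
        gcongr
    _ ≤ ((P.map fun p => lcsLen (g p.1) (g p.2)).sum : ℝ) :=
        length_mul_add_countP_mul_le_sum hg hL P
    _ ≤ lcsLen (X.flatMap g) ((Y.drop d).flatMap g) := by
        exact_mod_cast sum_map_zip_lcsLen_le g X (Y.drop d)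
    _ ≤ lcsLen (X.flatMap g) (Y.flatMap g) := by
        exact_mod_cast lcsLen_mono_right _ ((List.drop_sublist d Y).flatMap g)

end LCS

section Morphism

variable {α β : Type*}

lemma mem_take_drop_flatMap {φ : α → List β} {r : ℕ} (hr : 0 < r) (hφ : ∀ a, (φ a).length = r)
    {x : β} (hx : ∀ a, x ∈ φ a) : ∀ (Z : List α) (i : ℕ),
      2 * r ≤ ((Z.flatMap φ).drop i).length → x ∈ ((Z.flatMap φ).drop i).take (2 * r)
  | [], i, h => by simp at h; omega
  | z :: Z, i, h => by
    rw [List.flatMap_cons, List.drop_append, hφ] at h ⊢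
    rcases le_or_gt r i with hi | hi
    · rw [List.drop_eq_nil_of_le (by rw [hφ]; exact hi), List.nil_append] at h ⊢
      exact mem_take_drop_flatMap hr hφ hx Z (i - r) h
    · obtain ⟨z', Z', rfl⟩ : ∃ z' Z', Z = z' :: Z' := by
        cases Z with
        | nil => simp [hφ] at h; omega
        | cons z' Z' => exact ⟨z', Z', rfl⟩
      rw [Nat.sub_eq_zero_of_le hi.le, List.drop_zero, List.take_append, List.flatMap_cons,
        List.take_append, List.length_drop, hφ]
      refine List.mem_append_right _ (List.mem_append_left _ ?_)
      rw [List.take_of_length_le (by rw [hφ]; omega)]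
      exact hx z'

lemma iterate_flatMap (φ : α → List α) (m : ℕ) (w : List α) :
    (List.flatMap φ)^[m] w = w.flatMap fun a => (List.flatMap φ)^[m] [a] := by
  induction m generalizing w with
  | zero => simp
  | succ m ih =>
    simp only [Function.iterate_succ_apply']
    rw [ih w, List.flatMap_assoc]

lemma length_iterate_flatMap {φ : α → List α} {r : ℕ} (hφ : ∀ a, (φ a).length = r) (m : ℕ)
    (w : List α) : ((List.flatMap φ)^[m] w).length = w.length * r ^ m := by
  induction m generalizing w with
  | zero => simp
  | succ m ih =>
    rw [Function.iterate_succ_apply', List.length_flatMap]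
    simp [hφ, ih, pow_succ, mul_assoc]

theorem lcsLen_iterate_add_ge {φ : α → List α} {r : ℕ} (hφ : ∀ a, (φ a).length = r)
    (hall : ∀ a b, b ∈ φ a) (hr : 0 < r) {m k : ℕ} (hk : 0 < k) {x e : ℝ} (hx₀ : 0 ≤ x)
    (hx₁ : x ≤ 1) (he : (2 * r : ℝ) ^ 2 ≤ e * r ^ k)
    (h : ∀ a b, (1 - x) * r ^ m ≤ lcsLen ((List.flatMap φ)^[m] [a]) ((List.flatMap φ)^[m] [b]))
    (a b : α) :
    (1 - ((1 - 1 / (2 * r)) * x + e / (2 * r))) * r ^ (m + k) ≤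
      lcsLen ((List.flatMap φ)^[m + k] [a]) ((List.flatMap φ)^[m + k] [b]) := by
  classical
  set R : ℝ := r ^ k
  set ℓ : ℝ := r ^ m
  have hℓ : 0 ≤ ℓ := by positivity
  have hsplit (c : α) : (List.flatMap φ)^[m + k] [c] =
      ((List.flatMap φ)^[k] [c]).flatMap fun a => (List.flatMap φ)^[m] [a] := by
    rw [Function.iterate_add_apply, iterate_flatMap]
  have hY : (List.flatMap φ)^[k] [b] = ((List.flatMap φ)^[k - 1] [b]).flatMap φ := by
    rw [← Function.iterate_succ_apply' (List.flatMap φ), Nat.succ_eq_add_one, Nat.sub_add_cancel hk]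
  have key := lcsLen_flatMap_ge (g := fun a => (List.flatMap φ)^[m] [a]) (ℓ := r ^ m)
    (L := (1 - x) * r ^ m) (w := 2 * r) (X := (List.flatMap φ)^[k] [a])
    (Y := (List.flatMap φ)^[k] [b]) (fun a => by simp [length_iterate_flatMap hφ]) h
    (by nlinarith) (by push_cast; nlinarith) (by omega)
    (by simp [length_iterate_flatMap hφ])
    (by rw [hY]; exact fun i x => mem_take_drop_flatMap hr hφ (hall · x) _ i)
  rw [hsplit, hsplit]
  refine le_trans ?_ key
  simp only [length_iterate_flatMap hφ, List.length_singleton, one_mul]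
  push_cast
  have hr₁ : (1 : ℝ) ≤ r := by exact_mod_cast hr
  have hgap : (R - 2 * r) * ((1 - x) * ℓ) + (R - 2 * r) / (2 * r) * (ℓ - (1 - x) * ℓ)
      - (1 - ((1 - 1 / (2 * r)) * x + e / (2 * r))) * (R * ℓ)
      = ℓ * ((e * R - (2 * r) ^ 2) / (2 * r) + (2 * r - 1) * x) := by
    field_simp
    ring
  rw [pow_add, mul_comm ((r : ℝ) ^ m), ← sub_nonneg, hgap]
  have := sub_nonneg.2 he
  have : (0 : ℝ) ≤ 2 * r - 1 := by linarith
  positivity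

theorem lcsLen_iterate_mul_ge {φ : α → List α} {r : ℕ} (hφ : ∀ a, (φ a).length = r)
    (hall : ∀ a b, b ∈ φ a) (hr : 0 < r) {k : ℕ} (hk : 0 < k) {e : ℝ} (he₀ : 0 ≤ e)
    (he₁ : e ≤ 1) (he : (2 * r : ℝ) ^ 2 ≤ e * r ^ k) (j : ℕ) (a b : α) :
    (1 - (e + (1 - e) * (1 - 1 / (2 * r)) ^ j)) * r ^ (j * k) ≤
      lcsLen ((List.flatMap φ)^[j * k] [a]) ((List.flatMap φ)^[j * k] [b]) := by
  induction j generalizing a b with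
  | zero => simp
  | succ j ih =>
    have hr₁ : (1 : ℝ) ≤ r := by exact_mod_cast hr
    have hu₀ : 0 ≤ 1 - 1 / (2 * r : ℝ) := by
      rw [sub_nonneg, div_le_one (by positivity)]
      linarith
    have hu₁ : (1 - 1 / (2 * r : ℝ)) ^ j ≤ 1 := pow_le_one₀ hu₀ (by simp)
    have := lcsLen_iterate_add_ge hφ hall hr hk (by positivity) (by nlinarith) he ih a b
    rw [Nat.succ_mul]
    convert this using 3
    ring

theorem exists_lcsLen_iterate_ge {φ : α → List α} {r : ℕ} (hφ : ∀ a, (φ a).length = r)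
    (hall : ∀ a b, b ∈ φ a) (hr : 2 ≤ r) {ε : ℝ} (hε : 0 < ε) :
    ∃ m, ∀ a b, (1 - ε) * r ^ m ≤
      lcsLen ((List.flatMap φ)^[m] [a]) ((List.flatMap φ)^[m] [b]) := by
  set e := min (ε / 2) 1
  have he₀ : 0 < e := lt_min (half_pos hε) one_pos
  have hr₂ : (2 : ℝ) ≤ r := by exact_mod_cast hr
  obtain ⟨k, hk⟩ := pow_unbounded_of_one_lt ((2 * r : ℝ) ^ 2 / e) (by linarith : (1 : ℝ) < r)
  obtain ⟨j, hj⟩ := exists_pow_lt_of_lt_one (half_pos hε)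
    (sub_lt_self 1 (one_div_pos.2 (by linarith) : 0 < 1 / (2 * r : ℝ)))
  refine ⟨j * (k + 1), fun a b => le_trans ?_ (lcsLen_iterate_mul_ge hφ hall (by omega)
    k.succ_pos he₀.le (min_le_right _ _) ?_ j a b)⟩
  · have : e ≤ ε / 2 := min_le_left _ _
    have hu₀ : 0 ≤ 1 - 1 / (2 * r : ℝ) := by
      rw [sub_nonneg, div_le_one (by positivity)]
      linarith
    have : 0 ≤ e * (1 - 1 / (2 * r : ℝ)) ^ j := by positivity
    gcongr
    linarith
  · rw [div_lt_iff₀ he₀] at hk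
    calc (2 * r : ℝ) ^ 2 ≤ r ^ k * e := hk.le
      _ ≤ e * r ^ (k + 1) := by rw [pow_succ]; nlinarith [pow_pos (by linarith : (0 : ℝ) < r) k]

end Morphism

theorem morphism_lcs_lower_bound_general {α : Type*} [Fintype α] (r : ℕ)
    (φ : α → List α) (hφ : ∀ σ : α, (φ σ).length = r)
    (hall : ∀ σ τ : α, τ ∈ φ σ)
    (n : ℕ) (δ : ℝ) (hδ : 0 < δ) :
    ∃ m : ℕ, ∀ a b : α,
      (1 - (1 - 1 / ((Fintype.card α : ℝ) ^ 2 * (r : ℝ))) ^ n - δ) * (r : ℝ) ^ m ≤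
        (lcsLen ((fun l : List α => (l.map φ).flatten)^[m] [a])
                ((fun l : List α => (l.map φ).flatten)^[m] [b]) : ℝ) := by
  have hpow : 0 ≤ (1 - 1 / ((Fintype.card α : ℝ) ^ 2 * (r : ℝ))) ^ n := by
    have := Nat.cast_inv_le_one (α := ℝ) (Fintype.card α ^ 2 * r)
    push_cast at this
    exact pow_nonneg (by rw [one_div]; linarith) n
  rcases subsingleton_or_nontrivial α with hα | hα
  · refine ⟨0, fun a b => ?_⟩
    rw [Subsingleton.elim a b]
    simp only [Function.iterate_zero, id_eq, lcsLen_self, List.length_singleton]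
    push_cast
    linarith
  · classical
    obtain ⟨a, b, hab⟩ := exists_pair_ne α
    have hr : 2 ≤ r := by
      have h₁ := List.count_pos_iff.2 (hall a a)
      have h₂ := List.count_lt_length_iff.2 ⟨b, hall a b, hab.symm⟩
      rw [← hφ a]
      omega
    obtain ⟨m, hm⟩ := exists_lcsLen_iterate_ge hφ hall hr (add_pos_of_nonneg_of_pos hpow hδ)
    exact ⟨m, fun a b => le_of_eq_of_le (by ring) (hm a b)⟩

/-- If `φ` is a uniform morphism of rank `r` over a finite
alphabet `Σ` such that `φ(σ)` contains every symbol of `Σ` for each `σ`, then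
for every `n` and `δ ∈ (0,1)` there is an `m` such that for all `a, b`,
`LCS(φ^m(a), φ^m(b)) ≥ (1 − (1 − 1/(|Σ|²·r))^n − δ)·r^m`. -/
theorem morphism_lcs_lower_bound {α : Type*} [Fintype α] (r : ℕ)
    (φ : α → List α) (hφ : ∀ σ : α, (φ σ).length = r)
    (hall : ∀ σ τ : α, τ ∈ φ σ)
    (n : ℕ) (δ : ℝ) (hδ : 0 < δ) (hδ1 : δ < 1) :
    ∃ m : ℕ, ∀ a b : α,
      (1 - (1 - 1 / ((Fintype.card α : ℝ) ^ 2 * (r : ℝ))) ^ n - δ) * (r : ℝ) ^ m ≤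
        (lcsLen ((fun l : List α => (l.map φ).flatten)^[m] [a])
                ((fun l : List α => (l.map φ).flatten)^[m] [b]) : ℝ) :=
  morphism_lcs_lower_bound_general r φ hφ hall n δ hδ
end
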